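/- arXiv:2211.12597 — 6 statements merged into one kernel-verified Lean document; each statement's English description precedes it below -/
import Mathlib

section
/- Let Ω ⊆ ℝⁿ be a convex set, x̄ ∈ Ω, and d ∈ T_Ω(x̄) an element of the tangent cone of Ω at x̄. Then the directional limiting normal cone satisfies N_Ω(x̄; d) = N_Ω(x̄) ∩ {d}^⊥, i.e., a vector ζ belongs to the directional normal cone in direction d if and only if ζ is in the (convex) normal cone to Ω at x̄ and ⟨ζ, d⟩ = 0. -/
open Filter Topology

noncomputable section

abbrev Euc (n : ℕ) := EuclideanSpace ℝ (Fin n)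

/-- The directional neighborhood 𝒱_{ε,δ}(d). -/
def dirNbhd {n : ℕ} (ε δ : ℝ) (d : Euc n) : Set (Euc n) :=
  {z | ‖z‖ < ε ∧ ‖‖d‖ • z - ‖z‖ • d‖ ≤ δ * (‖z‖ * ‖d‖)}

/-- The translated directional neighborhood xb + 𝒱_{ε,δ}(d). -/
def dirNbhdPt {n : ℕ} (xb : Euc n) (ε δ : ℝ) (d : Euc n) : Set (Euc n) :=
  (fun z => xb + z) '' dirNbhd ε δ d

/-- xₖ → xb in direction u : xₖ = xb + tₖ • uₖ with tₖ ↓ 0, uₖ → u. -/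
def TendstoDir {n : ℕ} (x : ℕ → Euc n) (xb u : Euc n) : Prop :=
  ∃ t : ℕ → ℝ, ∃ v : ℕ → Euc n,
    (∀ k, 0 < t k) ∧ Tendsto t atTop (𝓝 0) ∧ Tendsto v atTop (𝓝 u) ∧
    ∀ k, x k = xb + t k • v k

/-- The tangent (contingent) cone. -/
def tangentConeSeq {n : ℕ} (Ω : Set (Euc n)) (xb : Euc n) : Set (Euc n) :=
  {d | ∃ t : ℕ → ℝ, ∃ dk : ℕ → Euc n,
    (∀ k, 0 < t k) ∧ Tendsto t atTop (𝓝 0) ∧ Tendsto dk atTop (𝓝 d) ∧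
    ∀ k, xb + t k • dk k ∈ Ω}

/-- The regular (Fréchet) normal cone; empty at points outside Ω. -/
def regNormal {n : ℕ} (Ω : Set (Euc n)) (x : Euc n) : Set (Euc n) :=
  {ζ | x ∈ Ω ∧ ∀ ε > (0:ℝ), ∃ ρ > (0:ℝ), ∀ y ∈ Ω, ‖y - x‖ < ρ →
    (@inner ℝ _ _ ζ (y - x)) ≤ ε * ‖y - x‖}

/-- The limiting (Mordukhovich) normal cone. -/
def limNormal {n : ℕ} (Ω : Set (Euc n)) (xb : Euc n) : Set (Euc n) :=
  {ζ | ∃ xk : ℕ → Euc n, ∃ ζk : ℕ → Euc n,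
    Tendsto xk atTop (𝓝 xb) ∧ Tendsto ζk atTop (𝓝 ζ) ∧
    ∀ k, ζk k ∈ regNormal Ω (xk k)}

/-- The directional limiting normal cone N_Ω(xb; d). -/
def dirNormal {n : ℕ} (Ω : Set (Euc n)) (xb d : Euc n) : Set (Euc n) :=
  {ζ | ∃ t : ℕ → ℝ, ∃ dk ζk : ℕ → Euc n,
    (∀ k, 0 < t k) ∧ Tendsto t atTop (𝓝 0) ∧ Tendsto dk atTop (𝓝 d) ∧
    Tendsto ζk atTop (𝓝 ζ) ∧ ∀ k, ζk k ∈ regNormal Ω (xb + t k • dk k)}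

/-- The regular (Fréchet) subdifferential of an extended-real-valued function. -/
def regSubdiff {n : ℕ} (f : Euc n → EReal) (x : Euc n) : Set (Euc n) :=
  {ξ | ∀ ε > (0:ℝ), ∃ ρ > (0:ℝ), ∀ y, ‖y - x‖ < ρ →
    f x + (((@inner ℝ _ _ ξ (y - x)) - ε * ‖y - x‖ : ℝ) : EReal) ≤ f y}

/-- The limiting (Mordukhovich) subdifferential. -/
def limSubdiff {n : ℕ} (f : Euc n → EReal) (x : Euc n) : Set (Euc n) :=
  {ξ | ∃ xk ξk : ℕ → Euc n, Tendsto xk atTop (𝓝 x) ∧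
    Tendsto (fun k => f (xk k)) atTop (𝓝 (f x)) ∧ Tendsto ξk atTop (𝓝 ξ) ∧
    ∀ k, ξk k ∈ regSubdiff f (xk k)}

/-- The directional limiting subdifferential ∂f(xb; u). -/
def dirLimSubdiff {n : ℕ} (f : Euc n → EReal) (xb u : Euc n) : Set (Euc n) :=
  {ξ | ∃ xk ξk : ℕ → Euc n, TendstoDir xk xb u ∧
    Tendsto (fun k => f (xk k)) atTop (𝓝 (f xb)) ∧ Tendsto ξk atTop (𝓝 ξ) ∧
    ∀ k, ξk k ∈ regSubdiff f (xk k)}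

/-- The directional singular subdifferential ∂^∞ f(xb; u). -/
def dirSingSubdiff {n : ℕ} (f : Euc n → EReal) (xb u : Euc n) : Set (Euc n) :=
  {ξ | ∃ xk ξk : ℕ → Euc n, ∃ τ : ℕ → ℝ, TendstoDir xk xb u ∧
    (∀ k, 0 < τ k) ∧ Tendsto τ atTop (𝓝 0) ∧
    Tendsto (fun k => τ k • ξk k) atTop (𝓝 ξ) ∧
    Tendsto (fun k => f (xk k)) atTop (𝓝 (f xb)) ∧
    ∀ k, ξk k ∈ regSubdiff f (xk k)}

/-- f is continuous at xb in direction u. -/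
def DirContinuous {n : ℕ} (f : Euc n → EReal) (xb u : Euc n) : Prop :=
  ∀ xk : ℕ → Euc n, TendstoDir xk xb u →
    Tendsto (fun k => f (xk k)) atTop (𝓝 (f xb))

/-- f is locally lower semicontinuous at xb in direction u (with f xb = fx ∈ ℝ). -/
def DirLocLSC {n : ℕ} (f : Euc n → EReal) (xb u : Euc n) (fx : ℝ) : Prop :=
  ∃ ε > (0:ℝ), ∃ δ > (0:ℝ), IsClosed
    ({p : Euc n × ℝ | f p.1 ≤ (p.2 : EReal)} ∩
     (closure (dirNbhdPt xb ε δ u) ×ˢ Metric.closedBall fx ε))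

/-- f is Lipschitz continuous around xb in direction u. -/
def DirLipschitz {n : ℕ} (f : Euc n → EReal) (xb u : Euc n) : Prop :=
  ∃ L : ℝ, ∃ ε > (0:ℝ), ∃ δ > (0:ℝ),
    ∀ a ∈ dirNbhdPt xb ε δ u, ∀ b ∈ dirNbhdPt xb ε δ u,
      ∃ fa fb : ℝ, f a = (fa : EReal) ∧ f b = (fb : EReal) ∧
        |fa - fb| ≤ L * ‖a - b‖

/-- The optimal value function of the parametric problem min f(x,y) s.t. P(x,y) ∈ Γ. -/
def valueFn {n m p : ℕ} (f : Euc n × Euc m → ℝ) (P : Euc n × Euc m → Euc p)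
    (Γ : Set (Euc p)) (x : Euc n) : EReal :=
  sInf ((fun y => ((f (x, y) : ℝ) : EReal)) '' {y | P (x, y) ∈ Γ})

/-- The solution map of the parametric problem. -/
def solnSet {n m p : ℕ} (f : Euc n × Euc m → ℝ) (P : Euc n × Euc m → Euc p)
    (Γ : Set (Euc p)) (x : Euc n) : Set (Euc m) :=
  {y | P (x, y) ∈ Γ ∧ ((f (x, y) : ℝ) : EReal) = valueFn f P Γ x}

/-- The graphical derivative of φ at x in direction u. -/
def graphDeriv {n m : ℕ} (φ : Euc n → Euc m) (x u : Euc n) : Set (Euc m) :=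
  {d | ∃ t : ℕ → ℝ, ∃ uk : ℕ → Euc n, (∀ k, 0 < t k) ∧ Tendsto t atTop (𝓝 0) ∧
    Tendsto uk atTop (𝓝 u) ∧
    Tendsto (fun k => (t k)⁻¹ • (φ (x + t k • uk k) - φ x)) atTop (𝓝 d)}

end

local notation "⟪" x ", " y "⟫" => @inner ℝ _ _ x y

/-- For a convex set, membership in the regular normal cone implies the global
convex normal-cone inequality. -/
lemma regNormal_convex_global {n : ℕ} {Ω : Set (Euc n)} (hconv : Convex ℝ Ω)
    {x ζ : Euc n} (hζ : ζ ∈ regNormal Ω x) : ∀ y ∈ Ω, ⟪ζ, y - x⟫ ≤ (0:ℝ) := by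
  obtain ⟨hxΩ, h⟩ := hζ
  intro y hy
  by_contra hc
  push_neg at hc
  have hyx : y - x ≠ 0 := by
    intro h0
    rw [h0, inner_zero_right] at hc
    exact lt_irrefl 0 hc
  have hnorm : (0:ℝ) < ‖y - x‖ := norm_pos_iff.mpr hyx
  set ε : ℝ := ⟪ζ, y - x⟫ / (2 * ‖y - x‖) with hεdef
  have hεpos : 0 < ε := div_pos hc (by positivity)
  obtain ⟨ρ, hρ, H⟩ := h ε hεpos
  set s : ℝ := min 1 (ρ / (2 * ‖y - x‖)) with hsdef
  have hspos : 0 < s := lt_min one_pos (by positivity)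
  have hs1 : s ≤ 1 := min_le_left _ _
  have hmem : x + s • (y - x) ∈ Ω := by
    have h2 := hconv hxΩ hy (by linarith : (0:ℝ) ≤ 1 - s) hspos.le (by ring)
    have : (1 - s) • x + s • y = x + s • (y - x) := by
      rw [smul_sub]; module
    rwa [this] at h2
  have hsmall : ‖(x + s • (y - x)) - x‖ < ρ := by
    have : (x + s • (y - x)) - x = s • (y - x) := by abel
    rw [this, norm_smul, Real.norm_eq_abs, abs_of_pos hspos]
    have hle : s ≤ ρ / (2 * ‖y - x‖) := min_le_right _ _
    calc s * ‖y - x‖ ≤ (ρ / (2 * ‖y - x‖)) * ‖y - x‖ := by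
          exact mul_le_mul_of_nonneg_right hle hnorm.le
      _ = ρ / 2 := by field_simp
      _ < ρ := by linarith
  have hfin := H _ hmem hsmall
  have heq : (x + s • (y - x)) - x = s • (y - x) := by abel
  rw [heq, real_inner_smul_right, norm_smul, Real.norm_eq_abs, abs_of_pos hspos] at hfin
  have : s * ⟪ζ, y - x⟫ ≤ s * (⟪ζ, y - x⟫ / 2) := by
    calc s * ⟪ζ, y - x⟫ ≤ ε * (s * ‖y - x‖) := hfin
      _ = s * (⟪ζ, y - x⟫ / 2) := by
          rw [hεdef]; field_simp
  have h3 : ⟪ζ, y - x⟫ ≤ ⟪ζ, y - x⟫ / 2 := le_of_mul_le_mul_left (by linarith) hspos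
  linarith


theorem stmt_2 {n : ℕ} (Ω : Set (Euc n)) (hconv : Convex ℝ Ω) (hcl : IsClosed Ω)
    (xb : Euc n) (hx : xb ∈ Ω) (d : Euc n) (hd : d ∈ tangentConeSeq Ω xb) :
    dirNormal Ω xb d =
      {ζ | (∀ y ∈ Ω, (@inner ℝ _ _ ζ (y - xb)) ≤ (0:ℝ)) ∧
        (@inner ℝ _ _ ζ d) = (0:ℝ)} := by
  ext ζ
  constructor
  · -- forward inclusion
    rintro ⟨t, dk, ζk, ht, ht0, hdk, hζk, hmem⟩
    have key : ∀ k, ∀ y ∈ Ω, ⟪ζk k, y - (xb + t k • dk k)⟫ ≤ (0:ℝ) :=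
      fun k => regNormal_convex_global hconv (hmem k)
    have hxkΩ : ∀ k, xb + t k • dk k ∈ Ω := fun k => (hmem k).1
    -- Claim 1 : ζ ∈ N_Ω(xb)
    have claim1 : ∀ y ∈ Ω, ⟪ζ, y - xb⟫ ≤ (0:ℝ) := by
      intro y hy
      have hle : ∀ k, ⟪ζk k, y - xb⟫ ≤ t k * ⟪ζk k, dk k⟫ := by
        intro k
        have h1 := key k y hy
        have : ⟪ζk k, y - xb⟫ = ⟪ζk k, y - (xb + t k • dk k)⟫ + t k * ⟪ζk k, dk k⟫ := by
          rw [← real_inner_smul_right, ← inner_add_right]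
          congr 1; abel
        rw [this]; linarith
      have h2 : Tendsto (fun k => ⟪ζk k, y - xb⟫) atTop (𝓝 ⟪ζ, y - xb⟫) :=
        hζk.inner tendsto_const_nhds
      have h3 : Tendsto (fun k => t k * ⟪ζk k, dk k⟫) atTop (𝓝 (0 * ⟪ζ, d⟫)) :=
        ht0.mul (hζk.inner hdk)
      rw [zero_mul] at h3
      exact le_of_tendsto_of_tendsto' h2 h3 hle
    refine ⟨claim1, le_antisymm ?_ ?_⟩
    · -- ⟪ζ, d⟫ ≤ 0 from d ∈ tangent cone and claim1
      obtain ⟨s, e, hs, hs0, he, hmem'⟩ := hd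
      have hle : ∀ j, ⟪ζ, e j⟫ ≤ (0:ℝ) := by
        intro j
        have h1 := claim1 _ (hmem' j)
        have h2 : (xb + s j • e j) - xb = s j • e j := by abel
        rw [h2, real_inner_smul_right] at h1
        nlinarith [hs j]
      have h2 : Tendsto (fun j => ⟪ζ, e j⟫) atTop (𝓝 ⟪ζ, d⟫) :=
        (tendsto_const_nhds : Tendsto (fun _ : ℕ => ζ) atTop _).inner he
      exact le_of_tendsto' h2 hle
    · -- 0 ≤ ⟪ζ, d⟫
      have hge : ∀ k, (0:ℝ) ≤ ⟪ζk k, dk k⟫ := by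
        intro k
        have h1 := key k xb hx
        have h2 : xb - (xb + t k • dk k) = -(t k • dk k) := by abel
        rw [h2, inner_neg_right, real_inner_smul_right] at h1
        nlinarith [ht k]
      have h2 : Tendsto (fun k => ⟪ζk k, dk k⟫) atTop (𝓝 ⟪ζ, d⟫) := hζk.inner hdk
      exact ge_of_tendsto' h2 hge
  · -- reverse inclusion
    rintro ⟨hN, hperp⟩
    obtain ⟨t, dk, ht, ht0, hdk, hmemΩ⟩ := hd
    set z : ℕ → Euc n := fun k => xb + t k • (d + ζ) with hz
    have hcomp : IsComplete Ω := hcl.isComplete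
    have key : ∀ k, ∃ w, w ∈ Ω ∧ (∀ y ∈ Ω, ⟪z k - w, y - w⟫ ≤ (0:ℝ)) ∧
        ∀ y ∈ Ω, ‖z k - w‖ ≤ ‖z k - y‖ := by
      intro k
      obtain ⟨w, hwΩ, hweq⟩ :=
        exists_norm_eq_iInf_of_complete_convex ⟨xb, hx⟩ hcomp hconv (z k)
      refine ⟨w, hwΩ, ?_, ?_⟩
      · exact (norm_eq_iInf_iff_real_inner_le_zero hconv hwΩ).mp hweq
      · intro y hy
        rw [hweq]
        exact ciInf_le ⟨0, fun r ⟨v, hv⟩ => hv ▸ norm_nonneg _⟩ (⟨y, hy⟩ : Ω)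
    choose w hwΩ hwN hwd using key
    set ζk : ℕ → Euc n := fun k => (t k)⁻¹ • (z k - w k) with hζkdef
    set uk : ℕ → Euc n := fun k => d + ζ - ζk k with hukdef
    have htne : ∀ k, (t k : ℝ) ≠ 0 := fun k => (ht k).ne'
    have hsmul : ∀ k, t k • ζk k = z k - w k := fun k => smul_inv_smul₀ (htne k) _
    have hwk : ∀ k, w k = xb + t k • uk k := by
      intro k
      have : t k • uk k = w k - xb := by
        rw [hukdef]; simp only
        rw [smul_sub, hsmul k, hz]; simp only
        abel
      rw [this]; abel
    -- norm bound : ‖ζk k‖ ≤ ‖d - dk k‖ + ‖ζ‖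
    have hnb : ∀ k, ‖ζk k‖ ≤ ‖d - dk k‖ + ‖ζ‖ := by
      intro k
      have h1 : ‖z k - w k‖ ≤ ‖z k - (xb + t k • dk k)‖ := hwd k _ (hmemΩ k)
      have h2 : z k - (xb + t k • dk k) = t k • (d + ζ - dk k) := by
        rw [hz]; simp only; rw [smul_sub]; abel
      rw [h2, norm_smul, Real.norm_eq_abs, abs_of_pos (ht k)] at h1
      have h3 : ‖ζk k‖ = (t k)⁻¹ * ‖z k - w k‖ := by
        rw [hζkdef]; simp only [norm_smul, Real.norm_eq_abs,
          abs_of_pos (inv_pos.mpr (ht k))]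
      rw [h3]
      have h4 : (t k)⁻¹ * ‖z k - w k‖ ≤ (t k)⁻¹ * (t k * ‖d + ζ - dk k‖) :=
        mul_le_mul_of_nonneg_left h1 (inv_pos.mpr (ht k)).le
      rw [inv_mul_cancel_left₀ (htne k)] at h4
      calc (t k)⁻¹ * ‖z k - w k‖ ≤ ‖d + ζ - dk k‖ := h4
        _ = ‖(d - dk k) + ζ‖ := by congr 1; abel
        _ ≤ ‖d - dk k‖ + ‖ζ‖ := norm_add_le _ _
    -- (*) : ⟪ζk, ζk⟫ ≤ ⟪ζk, ζ⟫ + ⟪ζk, d - dk⟫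
    have hstar : ∀ k, ⟪ζk k, ζk k⟫ ≤ ⟪ζk k, ζ⟫ + ⟪ζk k, d - dk k⟫ := by
      intro k
      have h1 := hwN k _ (hmemΩ k)
      have h2 : (xb + t k • dk k) - w k = t k • (dk k - uk k) := by
        rw [hwk k]; module
      rw [h2, ← hsmul k, real_inner_smul_left, real_inner_smul_right] at h1
      have h3 : ⟪ζk k, dk k - uk k⟫ ≤ 0 := by nlinarith [mul_pos (ht k) (ht k)]
      have h4 : dk k - uk k = ζk k - (ζ + (d - dk k)) := by
        rw [hukdef]; simp only; abel
      rw [h4, inner_sub_right, inner_add_right] at h3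
      linarith
    -- (**) : ‖ζ‖^2 ≤ ⟪ζ, ζk⟫
    have hstar2 : ∀ k, ⟪ζ, ζ⟫ ≤ ⟪ζ, ζk k⟫ := by
      intro k
      have h1 := hN _ (hwΩ k)
      rw [hwk k] at h1
      have h2 : (xb + t k • uk k) - xb = t k • uk k := by abel
      rw [h2, real_inner_smul_right] at h1
      have h3 : ⟪ζ, uk k⟫ ≤ 0 := by nlinarith [ht k]
      rw [hukdef] at h3; simp only at h3
      rw [inner_sub_right, inner_add_right, hperp] at h3
      linarith
    -- convergence of ζk to ζ
    have hsq : ∀ k, ‖ζk k - ζ‖^2 ≤ (‖d - dk k‖ + ‖ζ‖) * ‖d - dk k‖ := by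
      intro k
      have e1 : ‖ζk k - ζ‖^2 = ⟪ζk k, ζk k⟫ - 2 * ⟪ζk k, ζ⟫ + ⟪ζ, ζ⟫ := by
        rw [← real_inner_self_eq_norm_sq]
        rw [inner_sub_sub_self]
        rw [real_inner_comm ζ (ζk k)]
        ring
      have e2 : ⟪ζk k, ζ⟫ = ⟪ζ, ζk k⟫ := real_inner_comm _ _
      have h5 : ⟪ζk k, d - dk k⟫ ≤ ‖ζk k‖ * ‖d - dk k‖ := real_inner_le_norm _ _
      have h6 : ‖ζk k‖ * ‖d - dk k‖ ≤ (‖d - dk k‖ + ‖ζ‖) * ‖d - dk k‖ :=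
        mul_le_mul_of_nonneg_right (hnb k) (norm_nonneg _)
      have h7 := hstar k
      have h8 := hstar2 k
      rw [e2] at h7
      rw [e1, e2]
      linarith
    have hnormtend : Tendsto (fun k => ‖ζk k - ζ‖) atTop (𝓝 0) := by
      have hb : Tendsto (fun k => (‖d - dk k‖ + ‖ζ‖) * ‖d - dk k‖) atTop (𝓝 0) := by
        have h1 : Tendsto (fun k => ‖d - dk k‖) atTop (𝓝 0) := by
          have h0 : Tendsto (fun k => d - dk k) atTop (𝓝 (d - d)) :=
            (tendsto_const_nhds : Tendsto (fun _ : ℕ => d) atTop _).sub hdk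
          rw [sub_self] at h0
          simpa using h0.norm
        have h2 : Tendsto (fun k => (‖d - dk k‖ + ‖ζ‖) * ‖d - dk k‖) atTop
            (𝓝 ((0 + ‖ζ‖) * 0)) :=
          (h1.add (tendsto_const_nhds : Tendsto (fun _ : ℕ => ‖ζ‖) atTop _)).mul h1
        simpa using h2
      have hsqrt := (Real.continuous_sqrt.tendsto 0).comp hb
      rw [Real.sqrt_zero] at hsqrt
      refine squeeze_zero (fun k => norm_nonneg _) (fun k => ?_) hsqrt
      show ‖ζk k - ζ‖ ≤ Real.sqrt ((‖d - dk k‖ + ‖ζ‖) * ‖d - dk k‖)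
      have h1 : ‖ζk k - ζ‖ = Real.sqrt (‖ζk k - ζ‖^2) :=
        (Real.sqrt_sq (norm_nonneg _)).symm
      rw [h1]
      exact Real.sqrt_le_sqrt (hsq k)
    have hζktend : Tendsto ζk atTop (𝓝 ζ) := by
      rw [tendsto_iff_norm_sub_tendsto_zero]
      exact hnormtend
    have huktend : Tendsto uk atTop (𝓝 d) := by
      have := (tendsto_const_nhds : Tendsto (fun _ : ℕ => d + ζ) atTop _).sub hζktend
      simpa using this
    refine ⟨t, uk, ζk, ht, ht0, huktend, hζktend, ?_⟩
    intro k
    rw [← hwk k]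
    refine ⟨hwΩ k, fun ε hε => ⟨1, one_pos, fun y hy _ => ?_⟩⟩
    have h1 := hwN k y hy
    have h2 : ⟪ζk k, y - w k⟫ = (t k)⁻¹ * ⟪z k - w k, y - w k⟫ := by
      rw [hζkdef]; simp only [real_inner_smul_left]
    have h3 : ⟪ζk k, y - w k⟫ ≤ 0 := by
      rw [h2]
      exact mul_nonpos_of_nonneg_of_nonpos (inv_pos.mpr (ht k)).le h1
    have h4 : (0:ℝ) ≤ ε * ‖y - w k‖ := mul_nonneg hε.le (norm_nonneg _)
    linarith
end

section
/- (Outer semicontinuity of the directional normal cone) For a closed set Ω ⊆ ℝⁿ, x̄ ∈ Ω and direction d ∈ ℝⁿ, the directional limiting normal cone defined via regular normals equals the one defined via limiting normals: N_Ω(x̄; d) = {ζ : ∃ tₖ ↓ 0, dₖ → d, ζₖ → ζ such that ζₖ ∈ N_Ω(x̄ + tₖdₖ) for all k}. -/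
open Filter Topology

/-! A diagonal argument: each limiting normal `ζₖ` at `x̄ + tₖdₖ` is approximated by a regular
normal at a point `yₖ` with `‖yₖ - (x̄ + tₖdₖ)‖ ≤ tₖ/(k+1)`, so `yₖ = x̄ + tₖd'ₖ` with `d'ₖ → d`. -/

lemma regNormal_subset_limNormal {n : ℕ} (Ω : Set (Euc n)) (x : Euc n) :
    regNormal Ω x ⊆ limNormal Ω x :=
  fun _ hζ => ⟨fun _ => x, fun _ => _, tendsto_const_nhds, tendsto_const_nhds, fun _ => hζ⟩

lemma exists_regNormal_near_of_mem_limNormal {n : ℕ} {Ω : Set (Euc n)} {x ζ : Euc n}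
    (h : ζ ∈ limNormal Ω x) {δ ε : ℝ} (hδ : 0 < δ) (hε : 0 < ε) :
    ∃ y η : Euc n, η ∈ regNormal Ω y ∧ dist y x < δ ∧ dist η ζ < ε := by
  obtain ⟨xk, ζk, hxk, hζk, hreg⟩ := h
  obtain ⟨k, hxk_near, hζk_near⟩ :=
    ((hxk.eventually (Metric.ball_mem_nhds x hδ)).and
      (hζk.eventually (Metric.ball_mem_nhds ζ hε))).exists
  exact ⟨xk k, ζk k, hreg k, hxk_near, hζk_near⟩

lemma tendsto_inv_smul_sub_of_dist_le {E : Type*} [NormedAddCommGroup E] [NormedSpace ℝ E]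
    {t ε : ℕ → ℝ} {v y : ℕ → E} {x d : E} (ht : ∀ k, 0 < t k)
    (hv : Tendsto v atTop (𝓝 d)) (hε : Tendsto ε atTop (𝓝 0))
    (hy : ∀ k, dist (y k) (x + t k • v k) ≤ t k * ε k) :
    Tendsto (fun k => (t k)⁻¹ • (y k - x)) atTop (𝓝 d) := by
  refine hv.congr_dist (squeeze_zero (fun _ => dist_nonneg) (fun k => ?_) hε)
  have hscale : v k - (t k)⁻¹ • (y k - x) = (t k)⁻¹ • (x + t k • v k - y k) := by
    rw [smul_sub, smul_sub, smul_add, inv_smul_smul₀ (ht k).ne']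
    abel
  rw [dist_eq_norm, hscale, norm_smul, norm_inv, Real.norm_of_nonneg (ht k).le,
    ← dist_eq_norm, dist_comm, inv_mul_le_iff₀ (ht k)]
  exact hy k

theorem stmt_5_general {n : ℕ} (Ω : Set (Euc n)) (xb : Euc n) (d : Euc n) :
    dirNormal Ω xb d =
      {ζ | ∃ t : ℕ → ℝ, ∃ dk ζk : ℕ → Euc n,
        (∀ k, 0 < t k) ∧ Tendsto t atTop (𝓝 0) ∧ Tendsto dk atTop (𝓝 d) ∧
        Tendsto ζk atTop (𝓝 ζ) ∧ ∀ k, ζk k ∈ limNormal Ω (xb + t k • dk k)} := by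
  refine Set.Subset.antisymm (fun ζ ⟨t, dk, ζk, ht, ht0, hdk, hζk, hreg⟩ =>
    ⟨t, dk, ζk, ht, ht0, hdk, hζk, fun k => regNormal_subset_limNormal _ _ (hreg k)⟩) ?_
  rintro ζ ⟨t, dk, ζk, ht, ht0, hdk, hζk, hlim⟩
  have hε : ∀ k : ℕ, 0 < 1 / ((k : ℝ) + 1) := fun _ => Nat.one_div_pos_of_nat
  choose y η hreg hy hη using fun k =>
    exists_regNormal_near_of_mem_limNormal (hlim k) (mul_pos (ht k) (hε k)) (hε k)
  have hdir : Tendsto (fun k => (t k)⁻¹ • (y k - xb)) atTop (𝓝 d) :=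
    tendsto_inv_smul_sub_of_dist_le ht hdk tendsto_one_div_add_atTop_nhds_zero_nat
      fun k => (hy k).le
  have hη_lim : Tendsto η atTop (𝓝 ζ) :=
    hζk.congr_dist (squeeze_zero (fun _ => dist_nonneg)
      (fun k => (dist_comm (ζk k) (η k)).trans_le (hη k).le)
      tendsto_one_div_add_atTop_nhds_zero_nat)
  refine ⟨t, fun k => (t k)⁻¹ • (y k - xb), η, ht, ht0, hdir, hη_lim, fun k => ?_⟩
  simpa only [smul_inv_smul₀ (ht k).ne', add_sub_cancel] using hreg k

theorem stmt_5 {n : ℕ} (Ω : Set (Euc n)) (hΩ : IsClosed Ω) (xb : Euc n)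
    (hx : xb ∈ Ω) (d : Euc n) :
    dirNormal Ω xb d =
      {ζ | ∃ t : ℕ → ℝ, ∃ dk ζk : ℕ → Euc n,
        (∀ k, 0 < t k) ∧ Tendsto t atTop (𝓝 0) ∧ Tendsto dk atTop (𝓝 d) ∧
        Tendsto ζk atTop (𝓝 ζ) ∧ ∀ k, ζk k ∈ limNormal Ω (xb + t k • dk k)} :=
  stmt_5_general Ω xb d
end

section
/- Let f: ℝⁿ → ℝ ∪ {±∞} with x̄ ∈ dom f. The directional singular subdifferential defined with regular subgradients equals the one defined with limiting subgradients: ∂^∞ f(x̄; u) = {ξ : ∃ xₖ →ᵘ x̄, τₖ ↓ 0, ξₖ with τₖξₖ → ξ, f(xₖ) → f(x̄), and ξₖ ∈ ∂f(xₖ)}, where ∂f denotes the limiting subdifferential. -/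
open Filter Topology

/-
Both sides consist of the `ξ` for which `(0, u, f x̄, 0, ξ)` lies in the closure of the
scaled graph `{(t, v, f (x̄ + t v), τ, τ ζ) | t, τ > 0, ζ ∈ S (x̄ + t v)}`, with `S = ∂̂f`
resp. `S = ∂f`. As `∂f` consists of f-attentive limits of regular subgradients, the scaled
graph of `∂f` lies in the closure of that of `∂̂f`, so the two closures coincide; closure being
idempotent replaces the diagonal argument.
-/

theorem regSubdiff_subset_limSubdiff {n : ℕ} (f : Euc n → EReal) (x : Euc n) :
    regSubdiff f x ⊆ limSubdiff f x :=
  fun ξ hξ => ⟨fun _ => x, fun _ => ξ, tendsto_const_nhds, tendsto_const_nhds,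
    tendsto_const_nhds, fun _ => hξ⟩

def scaledGraph {n : ℕ} (f : Euc n → EReal) (xb : Euc n) (S : Euc n → Set (Euc n)) :
    Set (ℝ × Euc n × EReal × ℝ × Euc n) :=
  {p | ∃ t v τ ζ, 0 < t ∧ 0 < τ ∧ ζ ∈ S (xb + t • v) ∧
    p = (t, v, f (xb + t • v), τ, τ • ζ)}

section ScaledGraph

variable {n : ℕ} {f : Euc n → EReal} {xb : Euc n}

theorem scaledGraph_mono {S S' : Euc n → Set (Euc n)} (h : ∀ x, S x ⊆ S' x) :
    scaledGraph f xb S ⊆ scaledGraph f xb S' := by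
  rintro _ ⟨t, v, τ, ζ, ht, hτ, hζ, rfl⟩
  exact ⟨t, v, τ, ζ, ht, hτ, h _ hζ, rfl⟩

theorem exists_seq_iff_mem_closure_scaledGraph (S : Euc n → Set (Euc n)) (u ξ : Euc n) :
    (∃ xk ξk : ℕ → Euc n, ∃ τ : ℕ → ℝ, TendstoDir xk xb u ∧
      (∀ k, 0 < τ k) ∧ Tendsto τ atTop (𝓝 0) ∧
      Tendsto (fun k => τ k • ξk k) atTop (𝓝 ξ) ∧
      Tendsto (fun k => f (xk k)) atTop (𝓝 (f xb)) ∧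
      ∀ k, ξk k ∈ S (xk k)) ↔
    (0, u, f xb, 0, ξ) ∈ closure (scaledGraph f xb S) := by
  constructor
  · rintro ⟨xk, ξk, τ, ⟨t, v, ht, ht0, hv, hxk⟩, hτ, hτ0, hτξ, hfx, hS⟩
    obtain rfl : xk = fun k => xb + t k • v k := funext hxk
    refine mem_closure_of_tendsto (b := atTop)
      (f := fun k => (t k, v k, f (xb + t k • v k), τ k, τ k • ξk k)) ?_
      (Eventually.of_forall fun k => ⟨t k, v k, τ k, ξk k, ht k, hτ k, hS k, rfl⟩)
    exact ht0.prodMk_nhds (hv.prodMk_nhds (hfx.prodMk_nhds (hτ0.prodMk_nhds hτξ)))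
  · rw [mem_closure_iff_seq_limit]
    rintro ⟨p, hp, hlim⟩
    choose t v τ ξk ht hτ hS hpk using hp
    obtain rfl : p = fun k => (t k, v k, f (xb + t k • v k), τ k, τ k • ξk k) := funext hpk
    simp only [Prod.tendsto_iff] at hlim
    obtain ⟨ht0, hv, hfx, hτ0, hτξ⟩ := hlim
    exact ⟨fun k => xb + t k • v k, ξk, τ, ⟨t, v, ht, ht0, hv, fun _ => rfl⟩,
      hτ, hτ0, hτξ, hfx, hS⟩

theorem scaledGraph_limSubdiff_subset_closure :
    scaledGraph f xb (limSubdiff f) ⊆ closure (scaledGraph f xb (regSubdiff f)) := by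
  rintro _ ⟨t, v, τ, ζ, ht, hτ, ⟨xk, ζk, hx, hfx, hζ, hreg⟩, rfl⟩
  have hxk : ∀ k, xb + t • t⁻¹ • (xk k - xb) = xk k := fun k => by
    rw [smul_inv_smul₀ ht.ne', add_sub_cancel]
  have hv : Tendsto (fun k => t⁻¹ • (xk k - xb)) atTop (𝓝 v) := by
    simpa [ht.ne'] using (hx.sub_const xb).const_smul t⁻¹
  refine mem_closure_of_tendsto (b := atTop)
    (f := fun k => (t, t⁻¹ • (xk k - xb), f (xk k), τ, τ • ζk k)) ?_
    (Eventually.of_forall fun k =>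
      ⟨t, t⁻¹ • (xk k - xb), τ, ζk k, ht, hτ, (hxk k).symm ▸ hreg k, by rw [hxk]⟩)
  exact tendsto_const_nhds.prodMk_nhds
    (hv.prodMk_nhds (hfx.prodMk_nhds (tendsto_const_nhds.prodMk_nhds (hζ.const_smul τ))))

end ScaledGraph

theorem stmt_6_general {n : ℕ} (f : Euc n → EReal) (xb u : Euc n) :
    dirSingSubdiff f xb u =
      {ξ | ∃ xk ξk : ℕ → Euc n, ∃ τ : ℕ → ℝ, TendstoDir xk xb u ∧
        (∀ k, 0 < τ k) ∧ Tendsto τ atTop (𝓝 0) ∧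
        Tendsto (fun k => τ k • ξk k) atTop (𝓝 ξ) ∧
        Tendsto (fun k => f (xk k)) atTop (𝓝 (f xb)) ∧
        ∀ k, ξk k ∈ limSubdiff f (xk k)} := by
  have hclosure : closure (scaledGraph f xb (regSubdiff f)) =
      closure (scaledGraph f xb (limSubdiff f)) :=
    (closure_mono (scaledGraph_mono (regSubdiff_subset_limSubdiff f))).antisymm
      (closure_minimal scaledGraph_limSubdiff_subset_closure isClosed_closure)
  ext ξ
  exact (exists_seq_iff_mem_closure_scaledGraph _ u ξ).trans
    (hclosure ▸ (exists_seq_iff_mem_closure_scaledGraph _ u ξ).symm)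

theorem stmt_6 {n : ℕ} (f : Euc n → EReal) (xb u : Euc n) (hdom : f xb ≠ ⊤) :
    dirSingSubdiff f xb u =
      {ξ | ∃ xk ξk : ℕ → Euc n, ∃ τ : ℕ → ℝ, TendstoDir xk xb u ∧
        (∀ k, 0 < τ k) ∧ Tendsto τ atTop (𝓝 0) ∧
        Tendsto (fun k => τ k • ξk k) atTop (𝓝 ξ) ∧
        Tendsto (fun k => f (xk k)) atTop (𝓝 (f xb)) ∧
        ∀ k, ξk k ∈ limSubdiff f (xk k)} :=
  stmt_6_general f xb u
end

section
/- There exists a function f: ℝ → ℝ and a point x̄ = 0 such that f is continuous at x̄ in direction u = 1 (i.e., f(x) → f(0) as x → 0 along positive directions), but f is not locally lower semicontinuous at x̄ in direction u = 1, i.e., for all ε, δ > 0, the set epi f ∩ ([0, ε] × [f(0) − ε, f(0) + ε]) is not closed. A witness is f(x) = |x| if x is a nonzero rational number and f(x) = 0 otherwise. -/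
open Filter Topology

/-! `absOnRat` is continuous at `0` because `|absOnRat x| ≤ |x|`. Its epigraph near `0` is not
closed: the points `(x, 0)` with `x` irrational lie in it and accumulate at `(q, 0)` for every
rational `q > 0`, where `absOnRat q = q > 0`. -/

section EpigraphNotClosed

variable {X β : Type*} [TopologicalSpace X] [TopologicalSpace β] [Preorder β]

theorem not_isClosed_epigraph_inter_of_dense {f : X → β} {s U K : Set X} {L : Set β} {y : β}
    (hs : Dense s) (hfs : ∀ x ∈ s, f x ≤ y) (hU : IsOpen U) (hUK : U ⊆ K) (hy : y ∈ L)
    {r : X} (hr : r ∈ U) (hfr : y < f r) :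
    ¬ IsClosed ({p : X × β | f p.1 ≤ p.2} ∩ K ×ˢ L) := by
  intro hclosed
  have hmaps : Set.MapsTo (fun x => (x, y)) (U ∩ s) ({p : X × β | f p.1 ≤ p.2} ∩ K ×ˢ L) :=
    fun x hx => ⟨hfs x hx.2, hUK hx.1, hy⟩
  have hr_closure : r ∈ closure (U ∩ s) := hs.open_subset_closure_inter hU hr
  have hmem := hclosed.closure_subset (map_mem_closure (by fun_prop) hr_closure hmaps)
  exact (hfr.trans_le hmem.1).false

end EpigraphNotClosed

open Classical in
noncomputable def absOnRat (x : ℝ) : ℝ := if x ≠ 0 ∧ (∃ q : ℚ, (q : ℝ) = x) then |x| else 0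

theorem absOnRat_zero : absOnRat 0 = 0 := by
  simp [absOnRat]

theorem abs_absOnRat_le (x : ℝ) : |absOnRat x| ≤ |x| := by
  unfold absOnRat
  split_ifs <;> simp

theorem absOnRat_ratCast (q : ℚ) : absOnRat q = |(q : ℝ)| := by
  by_cases hq : q = 0
  · simp [hq, absOnRat_zero]
  · simp [absOnRat, hq]

theorem Irrational.absOnRat_eq_zero {x : ℝ} (hx : Irrational x) : absOnRat x = 0 := by
  simp only [absOnRat, ite_eq_right_iff]
  rintro ⟨-, q, rfl⟩
  exact absurd hx (Rat.not_irrational q)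

theorem tendsto_absOnRat_of_tendsto_zero {x : ℕ → ℝ} (hx : Tendsto x atTop (𝓝 0)) :
    Tendsto (fun k => absOnRat (x k)) atTop (𝓝 0) :=
  squeeze_zero_norm (fun k => abs_absOnRat_le (x k)) (by simpa using hx.abs)

theorem not_isClosed_epigraph_absOnRat {ε : ℝ} (hε : 0 < ε) :
    ¬ IsClosed ({p : ℝ × ℝ | absOnRat p.1 ≤ p.2} ∩
      Set.Icc 0 ε ×ˢ Set.Icc (absOnRat 0 - ε) (absOnRat 0 + ε)) := by
  obtain ⟨q, hq0, hqε⟩ := exists_rat_btwn hε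
  rw [absOnRat_zero]
  refine not_isClosed_epigraph_inter_of_dense dense_irrational
    (fun x hx => (Irrational.absOnRat_eq_zero hx).le) isOpen_Ioo Set.Ioo_subset_Icc_self
    ⟨by linarith, by linarith⟩ (r := (q : ℝ)) ⟨hq0, hqε⟩ ?_
  rwa [absOnRat_ratCast, abs_of_pos hq0]

open Classical in
theorem stmt_8 :
    ∃ f : ℝ → ℝ,
      f = (fun x => if x ≠ 0 ∧ (∃ q : ℚ, (q : ℝ) = x) then |x| else 0) ∧
      (∀ xk : ℕ → ℝ,
        (∃ t v : ℕ → ℝ, (∀ k, 0 < t k) ∧ Tendsto t atTop (𝓝 0) ∧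
          Tendsto v atTop (𝓝 (1:ℝ)) ∧ ∀ k, xk k = t k * v k) →
        Tendsto (fun k => f (xk k)) atTop (𝓝 (f 0))) ∧
      ∀ ε > (0:ℝ), ∀ δ > (0:ℝ),
        ¬ IsClosed ({p : ℝ × ℝ | f p.1 ≤ p.2} ∩
          ((Set.Icc (0:ℝ) ε) ×ˢ (Set.Icc (f 0 - ε) (f 0 + ε)))) := by
  refine ⟨absOnRat, rfl, ?_, fun ε hε _ _ => not_isClosed_epigraph_absOnRat hε⟩
  rintro xk ⟨t, v, -, ht, hv, hxk⟩
  obtain rfl : xk = fun k => t k * v k := funext hxk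
  rw [absOnRat_zero]
  exact tendsto_absOnRat_of_tendsto_zero (by simpa using ht.mul hv)
end

section
/- (Directional Danskin, inner semicontinuous case, upper estimate) Let f: ℝⁿ × ℝᵐ → ℝ be continuous, Γ ⊆ ℝᵐ closed, and suppose the partial gradient ∇ₓf(x, y) exists and is jointly continuous on U(x̄) × Γ for some neighborhood U(x̄) of x̄. Let V(x) := inf_{y ∈ Γ} f(x, y) and S(x) := argmin_{y ∈ Γ} f(x, y). If there exists ȳ ∈ S(x̄) such that S is inner semicontinuous at (x̄, ȳ) in direction u, then the directional limiting subdifferential satisfies ∂V(x̄; u) ⊆ {∇ₓf(x̄, ȳ)}. -/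
open Filter Topology

/-- The value function V(x) = inf_{y ∈ Γ} f(x,y), with values in EReal. -/
noncomputable def valueOn {n m : ℕ} (f : Euc n × Euc m → ℝ) (Γ : Set (Euc m))
    (x : Euc n) : EReal :=
  sInf ((fun y => ((f (x, y) : ℝ) : EReal)) '' Γ)


/-!
If `ξ` is a regular subgradient of `V` at a point `x` where the minimum is attained at `y`, then
`V ≤ f(·, y)` with equality at `x`, so `ξ` is also a regular subgradient of the differentiable
function `f(·, y)` at `x` and therefore equals `∇ₓf(x, y)`. Along a sequence `xₖ → x̄` in direction
`u`, inner semicontinuity supplies minimizers `yₖ → ȳ`, hence the subgradients are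
`ξₖ = ∇ₓf(xₖ, yₖ) → ∇ₓf(x̄, ȳ)` by continuity of the partial gradient.
-/

section FrechetSubgradient

variable {E : Type*} [NormedAddCommGroup E] [InnerProductSpace ℝ E]

lemma eq_zero_of_forall_eventually_inner_le {w x : E}
    (hw : ∀ ε > (0 : ℝ), ∀ᶠ y in 𝓝 x, inner ℝ w (y - x) ≤ ε * ‖y - x‖) : w = 0 := by
  refine norm_le_zero_iff.mp (le_of_forall_pos_le_add fun ε hε => ?_)
  have hray : Tendsto (fun t : ℝ => x + t • w) (𝓝[>] 0) (𝓝 x) := by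
    refine Tendsto.mono_left ?_ nhdsWithin_le_nhds
    exact (continuous_const.add (continuous_id.smul continuous_const)).tendsto' _ _ (by simp)
  obtain ⟨t, hle, ht : 0 < t⟩ := ((hray.eventually (hw ε hε)).and self_mem_nhdsWithin).exists
  simp only [add_sub_cancel_left, inner_smul_right, real_inner_self_eq_norm_sq, norm_smul,
    Real.norm_eq_abs, abs_of_pos ht] at hle
  have hsq : ‖w‖ ^ 2 ≤ ε * ‖w‖ := le_of_mul_le_mul_left (by linarith) ht
  nlinarith [norm_nonneg w]

lemma HasGradientAt.eq_of_forall_eventually_le [CompleteSpace E] {h : E → ℝ} {G ξ x : E}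
    (hG : HasGradientAt h G x)
    (hξ : ∀ ε > (0 : ℝ), ∀ᶠ y in 𝓝 x, h x + inner ℝ ξ (y - x) - ε * ‖y - x‖ ≤ h y) :
    ξ = G := by
  refine sub_eq_zero.mp (eq_zero_of_forall_eventually_inner_le (x := x) fun ε hε => ?_)
  filter_upwards [hξ (ε / 2) (half_pos hε),
    (hasGradientAt_iff_isLittleO.mp hG).def (half_pos hε)] with y hsub hlin
  rw [Real.norm_eq_abs] at hlin
  rw [inner_sub_left]
  linarith [le_abs_self (h y - h x - inner ℝ G (y - x))]

end FrechetSubgradient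

lemma eventually_le_of_mem_regSubdiff_of_le {n : ℕ} {φ : Euc n → EReal} {h : Euc n → ℝ} {x ξ : Euc n}
    (hle : ∀ y, φ y ≤ h y) (hx : φ x = h x) (hξ : ξ ∈ regSubdiff φ x) :
    ∀ ε > (0 : ℝ), ∀ᶠ y in 𝓝 x, h x + inner ℝ ξ (y - x) - ε * ‖y - x‖ ≤ h y := by
  intro ε hε
  obtain ⟨ρ, hρ, hball⟩ := hξ ε hε
  filter_upwards [Metric.ball_mem_nhds x hρ] with y hy
  have := (hball y (mem_ball_iff_norm.mp hy)).trans (hle y)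
  rw [hx, ← EReal.coe_add, EReal.coe_le_coe_iff] at this
  linarith

lemma HasGradientAt.eq_of_mem_regSubdiff_of_le {n : ℕ} {φ : Euc n → EReal} {h : Euc n → ℝ}
    {x G ξ : Euc n} (hG : HasGradientAt h G x) (hξ : ξ ∈ regSubdiff φ x)
    (hle : ∀ y, φ y ≤ h y) (hx : φ x = h x) : ξ = G :=
  hG.eq_of_forall_eventually_le (eventually_le_of_mem_regSubdiff_of_le hle hx hξ)

lemma valueOn_le {n m : ℕ} (f : Euc n × Euc m → ℝ) {Γ : Set (Euc m)} {y : Euc m} (hy : y ∈ Γ)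
    (x : Euc n) : valueOn f Γ x ≤ f (x, y) :=
  sInf_le (Set.mem_image_of_mem _ hy)

lemma TendstoDir.tendsto {n : ℕ} {x : ℕ → Euc n} {xb u : Euc n} (hx : TendstoDir x xb u) :
    Tendsto x atTop (𝓝 xb) := by
  obtain ⟨t, v, -, ht, hv, hx⟩ := hx
  rw [funext hx]
  simpa using tendsto_const_nhds.add (ht.smul hv)

theorem stmt_16_general {n m : ℕ} (f : Euc n × Euc m → ℝ) (Γ : Set (Euc m))
    (xb u : Euc n)
    (U : Set (Euc n)) (hU : U ∈ 𝓝 xb) (g : Euc n × Euc m → Euc n)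
    (hgc : ContinuousOn g (U ×ˢ Γ))
    (hgrad : ∀ x ∈ U, ∀ y ∈ Γ, HasGradientAt (fun x' => f (x', y)) (g (x, y)) x)
    (yb : Euc m) (hyΓ : yb ∈ Γ)
    (hisc : ∀ (t : ℕ → ℝ) (v : ℕ → Euc n), (∀ k, 0 < t k) →
      Tendsto t atTop (𝓝 0) → Tendsto v atTop (𝓝 u) →
      ∃ yk : ℕ → Euc m, (∀ k, yk k ∈ Γ ∧
          ((f (xb + t k • v k, yk k) : ℝ) : EReal) =
            valueOn f Γ (xb + t k • v k)) ∧
        Tendsto yk atTop (𝓝 yb)) :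
    dirLimSubdiff (valueOn f Γ) xb u ⊆ {g (xb, yb)} := by
  rintro ξ ⟨xk, ξk, hdir, -, hξ, hreg⟩
  have hx_lim := hdir.tendsto
  obtain ⟨t, v, ht, ht0, hv, hxk⟩ := hdir
  obtain ⟨yk, hyk, hy_lim⟩ := hisc t v ht ht0 hv
  have hxU : ∀ᶠ k in atTop, xk k ∈ U := hx_lim.eventually_mem hU
  have hξk : ∀ᶠ k in atTop, ξk k = g (xk k, yk k) := by
    filter_upwards [hxU] with k hk
    refine (hgrad _ hk _ (hyk k).1).eq_of_mem_regSubdiff_of_le (hreg k)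
      (valueOn_le f (hyk k).1) ?_
    rw [hxk k, (hyk k).2]
  have hg_lim : Tendsto (fun k => g (xk k, yk k)) atTop (𝓝 (g (xb, yb))) :=
    (hgc _ ⟨mem_of_mem_nhds hU, hyΓ⟩).tendsto.comp <| tendsto_nhdsWithin_iff.mpr
      ⟨hx_lim.prodMk_nhds hy_lim, hxU.mono fun k hk => ⟨hk, (hyk k).1⟩⟩
  exact tendsto_nhds_unique hξ (hg_lim.congr' (hξk.mono fun _ h => h.symm))

theorem stmt_16 {n m : ℕ} (f : Euc n × Euc m → ℝ) (Γ : Set (Euc m))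
    (hf : Continuous f) (hΓ : IsClosed Γ) (xb u : Euc n)
    (U : Set (Euc n)) (hU : U ∈ 𝓝 xb) (g : Euc n × Euc m → Euc n)
    (hgc : ContinuousOn g (U ×ˢ Γ))
    (hgrad : ∀ x ∈ U, ∀ y ∈ Γ, HasGradientAt (fun x' => f (x', y)) (g (x, y)) x)
    (yb : Euc m) (hyΓ : yb ∈ Γ)
    (hopt : ((f (xb, yb) : ℝ) : EReal) = valueOn f Γ xb)
    (hisc : ∀ (t : ℕ → ℝ) (v : ℕ → Euc n), (∀ k, 0 < t k) →
      Tendsto t atTop (𝓝 0) → Tendsto v atTop (𝓝 u) →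
      ∃ yk : ℕ → Euc m, (∀ k, yk k ∈ Γ ∧
          ((f (xb + t k • v k, yk k) : ℝ) : EReal) =
            valueOn f Γ (xb + t k • v k)) ∧
        Tendsto yk atTop (𝓝 yb)) :
    dirLimSubdiff (valueOn f Γ) xb u ⊆ {g (xb, yb)} :=
  stmt_16_general f Γ xb u U hU g hgc hgrad yb hyΓ hisc
end

section
/- (Danskin upper-smoothness step) Let f: ℝⁿ × ℝᵐ → ℝ be continuous with ∇ₓf jointly continuous on U(x̄) × Γ, Γ ⊆ ℝᵐ closed, V(x) := inf_{y ∈ Γ} f(x, y). For any x ∈ U(x̄) and any y* ∈ S(x) (a minimizer), the vector −∇ₓf(x, y*) is a regular (Fréchet) subgradient of −V at x, i.e., −∇ₓf(x, y*) ∈ ∂̂(−V)(x). -/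
open Filter Topology

theorem stmt_17 {n m : ℕ} (f : Euc n × Euc m → ℝ) (Γ : Set (Euc m))
    (hf : Continuous f) (hΓ : IsClosed Γ) (xb : Euc n)
    (U : Set (Euc n)) (hU : U ∈ 𝓝 xb) (g : Euc n × Euc m → Euc n)
    (hgc : ContinuousOn g (U ×ˢ Γ))
    (hgrad : ∀ x ∈ U, ∀ y ∈ Γ, HasGradientAt (fun x' => f (x', y)) (g (x, y)) x)
    (x : Euc n) (hx : x ∈ U) (ystar : Euc m) (hyΓ : ystar ∈ Γ)
    (hopt : ((f (x, ystar) : ℝ) : EReal) = valueOn f Γ x) :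
    -g (x, ystar) ∈ regSubdiff (fun x' => -(valueOn f Γ x')) x := by
  intro ε hε
  have hgr := hgrad x hx ystar hyΓ
  have hlo := (hasGradientAt_iff_isLittleO.mp hgr).def hε
  rw [Metric.eventually_nhds_iff] at hlo
  obtain ⟨ρ, hρ, hball⟩ := hlo
  refine ⟨ρ, hρ, fun x' hx' => ?_⟩
  have hd : dist x' x < ρ := by rwa [dist_eq_norm]
  have hkey := hball hd
  simp only [Real.norm_eq_abs] at hkey
  -- real inequality: f (x', ystar) ≤ f (x, ystar) + ⟪g (x,ystar), x'-x⟫ + ε ‖x'-x‖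
  have hreal : f (x', ystar) ≤ f (x, ystar) + (@inner ℝ _ _ (g (x, ystar)) (x' - x)) + ε * ‖x' - x‖ := by
    have := abs_le.mp hkey
    linarith [this.2]
  -- valueOn at x' is ≤ f (x', ystar)
  have hV : valueOn f Γ x' ≤ ((f (x', ystar) : ℝ) : EReal) :=
    sInf_le ⟨ystar, hyΓ, rfl⟩
  have hVx : -(valueOn f Γ x) = (((-(f (x, ystar))) : ℝ) : EReal) := by
    rw [← hopt]; rfl
  simp only [hVx]
  calc (((-(f (x, ystar))) : ℝ) : EReal) + (((@inner ℝ _ _ (-(g (x, ystar))) (x' - x)) - ε * ‖x' - x‖ : ℝ) : EReal)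
      = (((-(f (x, ystar))) + ((@inner ℝ _ _ (-(g (x, ystar))) (x' - x)) - ε * ‖x' - x‖) : ℝ) : EReal) := by
        rw [← EReal.coe_add]
    _ ≤ (((-(f (x', ystar))) : ℝ) : EReal) := by
        exact_mod_cast by rw [inner_neg_left]; linarith
    _ = -(((f (x', ystar) : ℝ)) : EReal) := rfl
    _ ≤ -(valueOn f Γ x') := EReal.neg_le_neg_iff.mpr hV
end
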